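/- The operator Q = (1/4)(|000⟩⟨000| + |111⟩⟨111| + |+++⟩⟨+++| + |−−−⟩⟨−−−|) on (ℂ²)^{⊗3} has operator norm ‖Q‖ = 3/8. -/

import Mathlib

open Matrix
open scoped Matrix.Norms.L2Operator

/-- `|0⟩, |1⟩, |+⟩, |−⟩` in ℂ². -/
noncomputable def st : Fin 4 → (Fin 2 → ℂ)
  | 0 => ![1, 0]
  | 1 => ![0, 1]
  | 2 => ![(Real.sqrt 2 : ℂ)⁻¹, (Real.sqrt 2 : ℂ)⁻¹]
  | 3 => ![(Real.sqrt 2 : ℂ)⁻¹, -(Real.sqrt 2 : ℂ)⁻¹]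

/-- The triple tensor product `|aaa⟩ = |a⟩⊗|a⟩⊗|a⟩` of a qubit state with itself. -/
noncomputable def triple (u : Fin 2 → ℂ) : Fin 2 × Fin 2 × Fin 2 → ℂ :=
  fun p => u p.1 * u p.2.1 * u p.2.2

/-!
Since `|+++⟩⟨+++| + |−−−⟩⟨−−−|` has entry `1/4` between basis vectors of equal parity and `0`
otherwise, `16 Q` is the integer matrix `W = P + 4 (|000⟩⟨000| + |111⟩⟨111|)`, with `P` the
equal-parity indicator. On each parity block `W` is `J + 4 E` (all-ones plus a corner), so
`W (W - 2) (W - 6) = 0`, and `3|000⟩ + |011⟩ + |101⟩ + |110⟩` is an eigenvector for `6`.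
`W` is symmetric, hence its operator norm is its spectral radius `6`, and `‖Q‖ = 6/16 = 3/8`.
-/

open Polynomial in
theorem Polynomial.eval_eq_zero_of_mem_spectrum {𝕜 A : Type*} [Field 𝕜] [Ring A] [Nontrivial A]
    [Algebra 𝕜 A] {a : A} {p : 𝕜[X]} (hp : aeval a p = 0) {z : 𝕜} (hz : z ∈ spectrum 𝕜 a) :
    p.eval z = 0 := by
  have := spectrum.subset_polynomial_aeval a p ⟨z, hz, rfl⟩
  rwa [hp, spectrum.zero_eq, Set.mem_singleton_iff] at this

theorem Matrix.mem_spectrum_of_mulVec_eq_smul {n R : Type*} [Fintype n] [DecidableEq n] [Field R]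
    {A : Matrix n n R} {v : n → R} {μ : R} (hv : v ≠ 0) (h : A *ᵥ v = μ • v) :
    μ ∈ spectrum R A := by
  rw [← spectrum_toLin', ← Module.End.hasEigenvalue_iff_mem_spectrum]
  exact Module.End.hasEigenvalue_of_hasEigenvector ⟨Module.End.mem_eigenspace_iff.mpr h, hv⟩

theorem IsStarNormal.norm_eq_of_mem_spectrum {A : Type*} [CStarAlgebra A] {a : A}
    [IsStarNormal a] {r : ℂ} (hr : r ∈ spectrum ℂ a) (hle : ∀ z ∈ spectrum ℂ a, ‖z‖ ≤ ‖r‖) :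
    ‖a‖ = ‖r‖ := by
  have hρ : spectralRadius ℂ a = ‖r‖₊ :=
    le_antisymm (iSup₂_le fun z hz => by exact_mod_cast hle z hz)
      (le_iSup₂ (f := fun z _ => (‖z‖₊ : ENNReal)) r hr)
  exact congrArg NNReal.toReal
    (ENNReal.coe_injective ((IsStarNormal.spectralRadius_eq_nnnorm a).symm.trans hρ))

def parity (p : Fin 2 × Fin 2 × Fin 2) : Fin 2 := p.1 + p.2.1 + p.2.2

def wiesnerMatrix : Matrix (Fin 2 × Fin 2 × Fin 2) (Fin 2 × Fin 2 × Fin 2) ℤ := fun i j =>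
  (if parity i = parity j then 1 else 0) + (if i = j ∧ i.1 = i.2.1 ∧ i.2.1 = i.2.2 then 4 else 0)

def wiesnerEigenvector (p : Fin 2 × Fin 2 × Fin 2) : ℤ :=
  if p = (0, 0, 0) then 3 else if parity p = 0 then 1 else 0

theorem wiesnerMatrix_transpose : wiesnerMatrixᵀ = wiesnerMatrix := by decide

theorem wiesnerMatrix_mul_sub_two_mul_sub_six :
    wiesnerMatrix * (wiesnerMatrix - 2) * (wiesnerMatrix - 6) = 0 := by decide

theorem wiesnerMatrix_mulVec_wiesnerEigenvector :
    wiesnerMatrix *ᵥ wiesnerEigenvector = 6 • wiesnerEigenvector := by decide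

theorem isSelfAdjoint_map_wiesnerMatrix : IsSelfAdjoint (wiesnerMatrix.map ((↑) : ℤ → ℂ)) := by
  ext i j
  have h := congrFun₂ wiesnerMatrix_transpose i j
  rw [transpose_apply] at h
  simp [h]

theorem six_mem_spectrum_map_wiesnerMatrix :
    (6 : ℂ) ∈ spectrum ℂ (wiesnerMatrix.map ((↑) : ℤ → ℂ)) := by
  refine mem_spectrum_of_mulVec_eq_smul (v := (↑) ∘ wiesnerEigenvector)
    (Function.ne_iff.mpr ⟨(0, 0, 0), by simp [wiesnerEigenvector]⟩) (funext fun i => ?_)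
  have h := RingHom.map_mulVec (Int.castRingHom ℂ) wiesnerMatrix wiesnerEigenvector i
  rw [wiesnerMatrix_mulVec_wiesnerEigenvector] at h
  simpa using h.symm

open Polynomial in
theorem norm_le_six_of_mem_spectrum_map_wiesnerMatrix {z : ℂ}
    (hz : z ∈ spectrum ℂ (wiesnerMatrix.map ((↑) : ℤ → ℂ))) : ‖z‖ ≤ 6 := by
  have hroots : wiesnerMatrix.map ((↑) : ℤ → ℂ) * (wiesnerMatrix.map (↑) - 2) *
      (wiesnerMatrix.map (↑) - 6) = 0 := by
    have h := congrArg (Int.castRingHom ℂ).mapMatrix wiesnerMatrix_mul_sub_two_mul_sub_six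
    rwa [map_mul, map_mul, map_sub, map_sub, map_ofNat, map_ofNat, map_zero] at h
  have hz := Polynomial.eval_eq_zero_of_mem_spectrum (p := X * (X - C 2) * (X - C 6))
    (by simpa only [map_mul, map_sub, aeval_X, aeval_C, map_ofNat] using hroots) hz
  simp only [eval_mul, eval_sub, eval_X, eval_C, mul_eq_zero, sub_eq_zero] at hz
  rcases hz with (rfl | rfl) | rfl <;> norm_num

theorem norm_map_wiesnerMatrix : ‖wiesnerMatrix.map ((↑) : ℤ → ℂ)‖ = 6 := by
  have := isSelfAdjoint_map_wiesnerMatrix.isStarNormal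
  rw [IsStarNormal.norm_eq_of_mem_spectrum six_mem_spectrum_map_wiesnerMatrix
    fun z hz => by simpa using norm_le_six_of_mem_spectrum_map_wiesnerMatrix hz]
  norm_num

theorem star_triple (u : Fin 2 → ℂ) : star (triple u) = triple (star u) := by
  ext p
  simp [triple]

theorem star_st (k : Fin 4) : star (st k) = st k := by
  ext i
  fin_cases k <;> fin_cases i <;> simp [st]

theorem smul_sum_vecMulVec_triple_st :
    (1 / 4 : ℂ) • ∑ k : Fin 4, vecMulVec (triple (st k)) (star (triple (st k))) =
      (1 / 16 : ℂ) • wiesnerMatrix.map (↑) := by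
  have h6 : (Real.sqrt 2 : ℂ)⁻¹ ^ 6 = 1 / 8 := by
    have h2 : (Real.sqrt 2 : ℂ) ^ 2 = 2 := by
      rw [← Complex.ofReal_pow, Real.sq_sqrt zero_le_two]
      norm_num
    rw [inv_pow, show (Real.sqrt 2 : ℂ) ^ 6 = ((Real.sqrt 2 : ℂ) ^ 2) ^ 3 by ring, h2]
    norm_num
  ext ⟨a, b, c⟩ ⟨d, e, f⟩
  simp only [star_triple, star_st, Matrix.smul_apply, Matrix.sum_apply, vecMulVec_apply, map_apply]
  simp only [Fin.sum_univ_four, st, triple, wiesnerMatrix, parity]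
  generalize (Real.sqrt 2 : ℂ)⁻¹ = s at h6
  fin_cases a, b, c, d, e, f <;>
  · simp
    try (ring_nf; rw [h6]; norm_num)

/-- The operator `Q = (1/4)(|000⟩⟨000| + |111⟩⟨111| + |+++⟩⟨+++| + |−−−⟩⟨−−−|)`
on `(ℂ²)^{⊗3}` has (ℓ²) operator norm `‖Q‖ = 3/8`. -/
theorem wiesner_Q_norm :
    ‖(1 / 4 : ℂ) • ∑ k : Fin 4,
        vecMulVec (triple (st k)) (star (triple (st k)))‖ = 3 / 8 := by
  rw [smul_sum_vecMulVec_triple_st, norm_smul, norm_map_wiesnerMatrix]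
  norm_num
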